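/- Let M be a monoid and k an algebraically closed M-field with |k| > |M|. For every set F of M-polynomials in variables X₁,…,Xₙ over k, the ideal I(V(F)) of M-polynomials vanishing on all solutions of F in (k^M)^n equals the radical of the ideal generated by {σ^m(f) : f ∈ F, m ∈ M}. -/

import Mathlib

/-!
Identify a point `x ∈ (k^M)^n` with `y : M × Fin n → k`, `y (m, j) = x j m`. Then
`σ^ℓ(f)(x) = 0` says that the translate `σ^ℓ f` vanishes at `y`, so `V(F)` becomes the zero locus
of `J = ⟨σ^m(F)⟩` in `k^(M × Fin n)`. There are fewer than `|k|` variables, so every residue field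
of the polynomial ring has `k`-dimension `< |k|`, is therefore algebraic over `k`, hence equal to
`k`; with Rabinowitsch's trick this gives the Nullstellensatz `I(Z(J)) = √J` in infinitely many
variables. Finally `√J` is stable under the translates, so vanishing of all `σ^ℓ f` on `Z(J)`
is equivalent to `f ∈ √J`.
-/

open MvPolynomial Cardinal

universe v w

theorem Algebra.isAlgebraic_of_rank_lt_cardinalMk {k L : Type w} [Field k] [Field L] [Algebra k L]
    (h : Module.rank k L < #k) : Algebra.IsAlgebraic k L := by
  refine ⟨fun t => ?_⟩
  by_contra ht
  exact h.not_ge (Transcendental.linearIndependent_sub_inv ht).cardinal_le_rank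

namespace MvPolynomial

variable {k σ : Type w} [Field k] [IsAlgClosed k]

theorem zeroLocus_nonempty_of_isMaximal [Infinite σ] (hσ : #σ < #k)
    (m : Ideal (MvPolynomial σ k)) [m.IsMaximal] : (zeroLocus k m).Nonempty := by
  let := Ideal.Quotient.field m
  have hrank : Module.rank k (MvPolynomial σ k ⧸ m) < #k := by
    refine lt_of_le_of_lt ?_ hσ
    have h := LinearMap.rank_le_of_surjective (Ideal.Quotient.mkₐ k m).toLinearMap
      (Ideal.Quotient.mkₐ_surjective k m)
    rwa [MvPolynomial.rank_eq, mk_finsupp_nat, max_eq_left (aleph0_le_mk σ)] at h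
  have := Algebra.isAlgebraic_of_rank_lt_cardinalMk hrank
  let e : k ≃ₐ[k] MvPolynomial σ k ⧸ m :=
    AlgEquiv.ofBijective (Algebra.ofId k _) IsAlgClosed.algebraMap_bijective_of_isIntegral
  let φ : MvPolynomial σ k →ₐ[k] k := e.symm.toAlgHom.comp (Ideal.Quotient.mkₐ k m)
  refine ⟨φ ∘ X, fun p hp => ?_⟩
  rw [← aeval_unique φ]
  simp [φ, Ideal.Quotient.eq_zero_iff_mem.2 hp]

theorem zeroLocus_nonempty_of_ne_top [Infinite σ] (hσ : #σ < #k)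
    {I : Ideal (MvPolynomial σ k)} (hI : I ≠ ⊤) : (zeroLocus k I).Nonempty := by
  obtain ⟨m, hm, hIm⟩ := I.exists_le_maximal hI
  exact (zeroLocus_nonempty_of_isMaximal hσ m).mono (zeroLocus_anti_mono hIm)

theorem vanishingIdeal_zeroLocus_le_radical_of_infinite [Infinite σ] (hσ : #σ < #k)
    (I : Ideal (MvPolynomial σ k)) : vanishingIdeal k (zeroLocus k I) ≤ I.radical := by
  intro p hp
  by_contra hpI
  let A := MvPolynomial σ k ⧸ I
  let R := Localization.Away (Ideal.Quotient.mk I p)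
  have : Nontrivial R := by
    rw [← not_subsingleton_iff_nontrivial,
      IsLocalization.subsingleton_iff (M := Submonoid.powers (Ideal.Quotient.mk I p)),
      ← isNilpotent_iff_zero_mem_powers]
    rintro ⟨n, hn⟩
    exact hpI ⟨n, by rwa [← map_pow, Ideal.Quotient.eq_zero_iff_mem] at hn⟩
  let g : MvPolynomial σ k →ₐ[k] R := (IsScalarTower.toAlgHom k A R).comp (Ideal.Quotient.mkₐ k I)
  -- Rabinowitsch: the extra variable `X none` is sent to `1 / p`.
  let v : Option σ → R :=
    fun o => o.elim (IsLocalization.Away.invSelf (Ideal.Quotient.mk I p)) (g ∘ X)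
  have hv : ∀ q, aeval v (rename some q) = algebraMap A R (Ideal.Quotient.mk I q) := fun q => by
    rw [aeval_rename]; exact (DFunLike.congr_fun (aeval_unique g) q).symm
  have hσ' : #(Option σ) < #k := by rwa [mk_option, add_one_eq (aleph0_le_mk σ)]
  obtain ⟨y, hy⟩ := zeroLocus_nonempty_of_ne_top hσ' (RingHom.ker_ne_top (aeval v))
  have hyI : y ∘ some ∈ zeroLocus k I := fun q hq => by
    rw [← aeval_rename]
    refine hy _ ?_
    rw [RingHom.mem_ker, hv, Ideal.Quotient.eq_zero_iff_mem.2 hq, map_zero]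
  have hinv : 1 - X none * rename some p ∈ RingHom.ker (aeval v) := by
    rw [RingHom.mem_ker, map_sub, map_one, map_mul, aeval_X, hv, mul_comm]
    exact sub_eq_zero.2 (IsLocalization.Away.mul_invSelf _).symm
  have h1 := hy _ hinv
  rw [map_sub, map_one, map_mul, aeval_X, aeval_rename, hp _ hyI, mul_zero, sub_zero] at h1
  exact one_ne_zero h1

theorem vanishingIdeal_zeroLocus_eq_radical_of_cardinalMk_lt (hσ : #σ < #k)
    (I : Ideal (MvPolynomial σ k)) :
    vanishingIdeal k (zeroLocus k I) = I.radical := by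
  cases finite_or_infinite σ
  · exact vanishingIdeal_zeroLocus_eq_radical I
  · exact le_antisymm (vanishingIdeal_zeroLocus_le_radical_of_infinite hσ I)
      (radical_le_vanishingIdeal_zeroLocus I)

section MAct

variable {M ι k : Type*} [Monoid M] [CommSemiring k] (σk : M → k →+* k)

/-- The action of `σ^m` on `M`-polynomials, where the variable `(m', j)` stands for `σ^m'(X_j)`. -/
noncomputable def mAct (m : M) : MvPolynomial (M × ι) k →+* MvPolynomial (M × ι) k :=
  (rename fun p : M × ι => (m * p.1, p.2)).toRingHom.comp (map (σk m))

theorem mAct_apply (m : M) (f : MvPolynomial (M × ι) k) :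
    mAct σk m f = rename (fun p : M × ι => (m * p.1, p.2)) (map (σk m) f) :=
  rfl

theorem eval_mAct (y : M × ι → k) (ℓ : M) (f : MvPolynomial (M × ι) k) :
    eval y (mAct σk ℓ f) = eval₂ (σk ℓ) (fun p => y (ℓ * p.1, p.2)) f := by
  rw [mAct_apply, eval_rename, eval_map]
  rfl

variable {σk}

theorem mAct_one (hone : σk 1 = RingHom.id k) (f : MvPolynomial (M × ι) k) :
    mAct σk 1 f = f := by
  simp only [mAct_apply, hone, map_id, one_mul, Prod.mk.eta]
  exact rename_id_apply f

theorem mAct_mAct (hmul : ∀ m₁ m₂ : M, σk (m₁ * m₂) = (σk m₁).comp (σk m₂)) (ℓ m : M)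
    (f : MvPolynomial (M × ι) k) : mAct σk ℓ (mAct σk m f) = mAct σk (ℓ * m) f := by
  simp [mAct_apply, map_rename, rename_rename, map_map, hmul, Function.comp_def, mul_assoc]

variable (σk) in
noncomputable def mIdeal (F : Set (MvPolynomial (M × ι) k)) : Ideal (MvPolynomial (M × ι) k) :=
  Ideal.span {q | ∃ g ∈ F, ∃ m : M, q = mAct σk m g}

theorem mAct_mem_radical_mIdeal (hmul : ∀ m₁ m₂ : M, σk (m₁ * m₂) = (σk m₁).comp (σk m₂))
    {F : Set (MvPolynomial (M × ι) k)} (ℓ : M) {f : MvPolynomial (M × ι) k}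
    (hf : f ∈ (mIdeal σk F).radical) : mAct σk ℓ f ∈ (mIdeal σk F).radical := by
  have hstable : (mIdeal σk F).map (mAct σk ℓ) ≤ mIdeal σk F := by
    rw [mIdeal, Ideal.map_span, Ideal.span_le]
    rintro _ ⟨_, ⟨g, hg, m, rfl⟩, rfl⟩
    exact Ideal.subset_span ⟨g, hg, ℓ * m, mAct_mAct hmul ℓ m g⟩
  obtain ⟨r, hr⟩ := hf
  exact ⟨r, hstable (by rw [← map_pow]; exact Ideal.mem_map_of_mem _ hr)⟩

end MAct

theorem mem_zeroLocus_mIdeal_iff {M ι k : Type*} [Monoid M] [Field k] {σk : M → k →+* k}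
    {F : Set (MvPolynomial (M × ι) k)} {y : M × ι → k} :
    y ∈ zeroLocus k (mIdeal σk F) ↔ ∀ g ∈ F, ∀ m : M, eval y (mAct σk m g) = 0 := by
  rw [mIdeal, zeroLocus_span]
  constructor
  · intro hy g hg m
    exact hy _ ⟨g, hg, m, rfl⟩
  · rintro hy _ ⟨g, hg, m, rfl⟩
    exact hy g hg m


theorem mem_radical_mIdeal_iff {M : Type v} {ι : Type w} {k : Type (max v w)} [Monoid M] [Field k]
    [IsAlgClosed k] {σk : M → k →+* k} (hone : σk 1 = RingHom.id k)
    (hmul : ∀ m₁ m₂ : M, σk (m₁ * m₂) = (σk m₁).comp (σk m₂)) (hcard : #(M × ι) < #k)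
    {F : Set (MvPolynomial (M × ι) k)} {f : MvPolynomial (M × ι) k} :
    f ∈ (mIdeal σk F).radical ↔
      ∀ y ∈ zeroLocus k (mIdeal σk F), ∀ ℓ : M, eval y (mAct σk ℓ f) = 0 := by
  have hNS := vanishingIdeal_zeroLocus_eq_radical_of_cardinalMk_lt hcard (mIdeal σk F)
  constructor
  · intro hf y hy ℓ
    exact (hNS ▸ mAct_mem_radical_mIdeal hmul ℓ hf : mAct σk ℓ f ∈ vanishingIdeal k _) y hy
  · intro hf
    rw [← hNS, ← mAct_one hone f]
    exact fun y hy => hf y hy 1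

end MvPolynomial

theorem stmt4.{u} (M : Type u) [Monoid M] (k : Type u) [Field k] [IsAlgClosed k]
    (σk : M → (k →+* k)) (hone : σk 1 = RingHom.id k)
    (hmul : ∀ m₁ m₂ : M, σk (m₁ * m₂) = (σk m₁).comp (σk m₂))
    (hcard : Cardinal.mk M < Cardinal.mk k)
    (n : ℕ) (F : Set (MvPolynomial (M × Fin n) k)) :
    {f : MvPolynomial (M × Fin n) k |
      ∀ x : Fin n → M → k,
        (∀ g ∈ F, ∀ ℓ : M,
            MvPolynomial.eval₂ (σk ℓ) (fun p : M × Fin n => x p.2 (ℓ * p.1)) g = 0) →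
        ∀ ℓ : M, MvPolynomial.eval₂ (σk ℓ) (fun p : M × Fin n => x p.2 (ℓ * p.1)) f = 0}
    = ↑(Ideal.span {q : MvPolynomial (M × Fin n) k |
        ∃ g ∈ F, ∃ m : M, q = MvPolynomial.rename (fun p : M × Fin n => (m * p.1, p.2))
          (MvPolynomial.map (σk m) g)}).radical := by
  have hMn : #(M × Fin n) < #k := by
    rw [mk_prod, lift_uzero]
    exact mul_lt_of_lt (aleph0_le_mk k) hcard
      ((lift_lt_aleph0.2 (lt_aleph0_of_finite _)).trans_le (aleph0_le_mk k))
  change _ = ((mIdeal σk F).radical : Set (MvPolynomial (M × Fin n) k))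
  ext f
  rw [Set.mem_ofPred_eq, SetLike.mem_coe, mem_radical_mIdeal_iff hone hmul hMn]
  constructor
  · intro hf y hy ℓ
    rw [eval_mAct]
    refine hf (fun j m => y (m, j)) (fun g hg m => ?_) ℓ
    rw [← eval_mAct]
    exact mem_zeroLocus_mIdeal_iff.1 hy g hg m
  · intro hf x hx ℓ
    have := hf (fun p => x p.2 p.1) (mem_zeroLocus_mIdeal_iff.2 fun g hg m => ?_) ℓ
    · rwa [eval_mAct] at this
    · rw [eval_mAct]
      exact hx g hg m
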